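/- arXiv:1710.05633 — 11 statements merged into one kernel-verified Lean document; each statement's English description precedes it below -/
import Mathlib

section
/- For every finite word t = t_0 … t_{k−1} over the alphabet Σ = 2^(AP × {0,…,n−1}), reps(t) equals the number of neutral rotations of t, i.e., reps(t) = |{j ∈ {0,…,n−1} : rot(t,j) = t}|. -/
/-- Rotation of a letter `x ⊆ AP × {0,…,n−1}` by `k`. -/
def rotL {AP : Type} [DecidableEq AP] (n : ℕ) (x : Finset (AP × ZMod n)) (k : ℤ) :
    Finset (AP × ZMod n) :=
  x.image (fun pj => (pj.1, pj.2 + (k : ZMod n)))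

/-- Letter-wise rotation of a finite word over `Σ = 2^(AP × {0,…,n−1})`. -/
def rotW {AP : Type} [DecidableEq AP] (n : ℕ) (t : List (Finset (AP × ZMod n))) (k : ℤ) :
    List (Finset (AP × ZMod n)) :=
  t.map (fun x => rotL n x k)

/-- `rep(x) = |{j ∈ {0,…,n−1} : rot(x,j) = x}|` for a single letter `x`. -/
def rep {AP : Type} [DecidableEq AP] (n : ℕ) (x : Finset (AP × ZMod n)) : ℕ :=
  ((Finset.range n).filter (fun j : ℕ => rotL n x ((j : ℤ)) = x)).card

/-- `reps(ε) = n` and `reps(w·x) = gcd(reps(w), rep(x))`. -/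
def reps {AP : Type} [DecidableEq AP] (n : ℕ) (t : List (Finset (AP × ZMod n))) : ℕ :=
  t.foldl (fun a x => Nat.gcd a (rep n x)) n

/-! The rotations fixing a word form a subgroup of the cyclic group `ℤ/n`: the intersection of
the stabilizers of its letters, and the neutral rotations among `0, …, n-1` are exactly its
elements. In a finite cyclic group the subgroup of order `d` is `{g | d • g = 0}`, so
`|H ⊓ K| = gcd |H| |K|`, which is the recursion defining `reps`. -/

open Finset

section CyclicGroup

variable {G : Type*} [CommGroup G] [IsCyclic G] [Finite G]

@[to_additive]
theorem IsCyclic.eq_ker_powMonoidHom_card (H : Subgroup G) :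
    H = (powMonoidHom (Nat.card H) : G →* G).ker := by
  refine Subgroup.eq_of_le_of_card_ge (fun g hg => ?_) ?_
  · exact congrArg Subtype.val (pow_card_eq_one' (x := (⟨g, hg⟩ : H)))
  · rw [IsCyclic.card_powMonoidHom_ker, Nat.gcd_eq_right (Subgroup.card_subgroup_dvd_card H)]

@[to_additive]
theorem IsCyclic.card_inf (H K : Subgroup G) :
    Nat.card ↥(H ⊓ K) = Nat.gcd (Nat.card H) (Nat.card K) := by
  have hHK : H ⊓ K = (powMonoidHom (Nat.gcd (Nat.card H) (Nat.card K)) : G →* G).ker := by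
    ext g
    conv_lhs => rw [IsCyclic.eq_ker_powMonoidHom_card H, IsCyclic.eq_ker_powMonoidHom_card K]
    simp only [Subgroup.mem_inf, MonoidHom.mem_ker, powMonoidHom_apply,
      ← orderOf_dvd_iff_pow_eq_one, Nat.dvd_gcd_iff]
  rw [hHK, IsCyclic.card_powMonoidHom_ker, Nat.gcd_eq_right]
  exact (Nat.gcd_dvd_left _ _).trans (Subgroup.card_subgroup_dvd_card H)

end CyclicGroup

theorem ZMod.card_filter_range_eq_natCard {n : ℕ} [NeZero n] (H : AddSubgroup (ZMod n))
    (p : ℕ → Prop) [DecidablePred p] (hp : ∀ j, p j ↔ (j : ZMod n) ∈ H) :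
    #{j ∈ range n | p j} = Nat.card H := by
  classical
  rw [Nat.card_eq_fintype_card, Fintype.card_subtype]
  refine card_nbij' (fun j => (j : ZMod n)) ZMod.val ?_ ?_ ?_ ?_
  · intro j hj
    simp_all
  · intro g hg
    simp_all [ZMod.val_lt]
  · intro j hj
    exact ZMod.val_natCast_of_lt (by simp_all)
  · intro g _
    exact ZMod.natCast_zmod_val g

section Rotation

variable {AP : Type} [DecidableEq AP] {n : ℕ}

def rotLetter (g : ZMod n) (x : Finset (AP × ZMod n)) : Finset (AP × ZMod n) :=
  x.image fun pj => (pj.1, pj.2 + g)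

theorem rotLetter_zero : rotLetter (0 : ZMod n) = (id : Finset (AP × ZMod n) → _) := by
  funext x
  simp [rotLetter]

theorem map_rotLetter_map_rotLetter (g h : ZMod n) (t : List (Finset (AP × ZMod n))) :
    (t.map (rotLetter g)).map (rotLetter h) = t.map (rotLetter (g + h)) := by
  rw [List.map_map]
  congr 1
  funext x
  simp only [Function.comp_apply, rotLetter, image_image, Function.comp_def, add_assoc]

theorem rotL_eq_rotLetter (x : Finset (AP × ZMod n)) (k : ℤ) :
    rotL n x k = rotLetter (k : ZMod n) x :=
  rfl

def rotStabilizer (t : List (Finset (AP × ZMod n))) : AddSubgroup (ZMod n) where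
  carrier := {g | t.map (rotLetter g) = t}
  zero_mem' := by simp [rotLetter_zero]
  add_mem' {g h} (hg : t.map _ = t) (hh : t.map _ = t) := by
    rw [Set.mem_ofPred_eq, ← map_rotLetter_map_rotLetter, hg, hh]
  neg_mem' {g} (hg : t.map _ = t) := by
    rw [Set.mem_ofPred_eq]
    conv_lhs => rw [← hg]
    rw [map_rotLetter_map_rotLetter, add_neg_cancel, rotLetter_zero, List.map_id]

theorem mem_rotStabilizer {t : List (Finset (AP × ZMod n))} {g : ZMod n} :
    g ∈ rotStabilizer t ↔ t.map (rotLetter g) = t :=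
  Iff.rfl

theorem rotStabilizer_nil : rotStabilizer ([] : List (Finset (AP × ZMod n))) = ⊤ := by
  ext g
  simp [mem_rotStabilizer]

theorem rotStabilizer_append (u v : List (Finset (AP × ZMod n))) :
    rotStabilizer (u ++ v) = rotStabilizer u ⊓ rotStabilizer v := by
  ext g
  simp only [mem_rotStabilizer, AddSubgroup.mem_inf, List.map_append]
  exact ⟨fun h => List.append_inj h (List.length_map _), fun ⟨hu, hv⟩ => by rw [hu, hv]⟩

variable [NeZero n]

theorem card_neutral_rotations (t : List (Finset (AP × ZMod n))) :
    #{j ∈ range n | rotW n t ((j : ℕ) : ℤ) = t} = Nat.card (rotStabilizer t) :=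
  ZMod.card_filter_range_eq_natCard _ _ fun j => by
    simp [mem_rotStabilizer, rotW, rotL_eq_rotLetter]

theorem rep_eq_natCard_rotStabilizer (x : Finset (AP × ZMod n)) :
    rep n x = Nat.card (rotStabilizer [x]) :=
  ZMod.card_filter_range_eq_natCard _ _ fun j => by
    simp [mem_rotStabilizer, rotL_eq_rotLetter]

theorem reps_eq_natCard_rotStabilizer (t : List (Finset (AP × ZMod n))) :
    reps n t = Nat.card (rotStabilizer t) := by
  induction t using List.reverseRecOn with
  | nil => simp [reps, rotStabilizer_nil]
  | append_singleton w x ih =>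
    rw [rotStabilizer_append, IsAddCyclic.card_inf, ← ih, ← rep_eq_natCard_rotStabilizer]
    simp [reps]

end Rotation

theorem reps_eq_card_neutral_rotations_general
    {AP : Type} [DecidableEq AP] (n : ℕ) (hn : 1 ≤ n)
    (t : List (Finset (AP × ZMod n))) :
    reps n t = ((Finset.range n).filter (fun j : ℕ => rotW n t ((j : ℤ)) = t)).card := by
  have : NeZero n := ⟨by omega⟩
  rw [reps_eq_natCard_rotStabilizer, card_neutral_rotations]

/-- `reps(t)` equals the number of neutral rotations of `t`. -/
theorem reps_eq_card_neutral_rotations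
    {AP : Type} [DecidableEq AP] [Fintype AP] (n : ℕ) (hn : 1 ≤ n)
    (t : List (Finset (AP × ZMod n))) :
    reps n t = ((Finset.range n).filter (fun j : ℕ => rotW n t ((j : ℤ)) = t)).card :=
  reps_eq_card_neutral_rotations_general n hn t
end

section
/- For every Moore machine M with finite state set, input alphabet I and output alphabet 2^(AP_O), the computation tree induced by the symmetric product of M has the symmetry property, i.e., it satisfies τ(rot(t,i)) = rot(τ(t),i) for every input word t ∈ I* and every 0 ≤ i < n. -/
/-- The state reached by a Moore machine with transition function `δ`
from state `s` after reading the input word `t`. -/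
def mooreRun {S I : Type} (δ : S → I → S) (s : S) (t : List I) : S :=
  t.foldl δ s

/-- Transition function of the symmetric product: the `i`-th component reads
the input rotated by `−i`. -/
def symProdδ {AP_I S : Type} [DecidableEq AP_I] (n : ℕ)
    (δ : S → Finset (AP_I × ZMod n) → S) :
    (ZMod n → S) → Finset (AP_I × ZMod n) → (ZMod n → S) :=
  fun f x i => δ (f i) (rotL n x (-(i.val : ℤ)))

/-- Labeling of the symmetric product: `(s_0,…,s_{n−1}) ↦ {(a,i) : a ∈ L(s_i)}`. -/
def symProdL {AP_O S : Type} [DecidableEq AP_O] [Fintype AP_O] (n : ℕ) [NeZero n]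
    (L : S → Finset AP_O) : (ZMod n → S) → Finset (AP_O × ZMod n) :=
  fun f => Finset.univ.filter (fun ai => ai.1 ∈ L (f ai.2))

/-- The computation tree induced by the symmetric product of the Moore machine
`(S, I, 2^(AP_O), δ, s0, L)`. -/
def symProdTree {AP_I AP_O S : Type} [DecidableEq AP_I] [DecidableEq AP_O] [Fintype AP_O]
    (n : ℕ) [NeZero n] (δ : S → Finset (AP_I × ZMod n) → S) (s0 : S) (L : S → Finset AP_O) :
    List (Finset (AP_I × ZMod n)) → Finset (AP_O × ZMod n) :=
  fun t => symProdL n L (mooreRun (symProdδ n δ) (fun _ => s0) t)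

lemma rotL_congr {AP : Type} [DecidableEq AP] (n : ℕ) (x : Finset (AP × ZMod n))
    {a b : ℤ} (h : ((a : ZMod n)) = (b : ZMod n)) : rotL n x a = rotL n x b := by
  simp [rotL, h]

lemma rotL_rotL {AP : Type} [DecidableEq AP] (n : ℕ) (x : Finset (AP × ZMod n)) (a b : ℤ) :
    rotL n (rotL n x a) b = rotL n x (a + b) := by
  simp [rotL, Finset.image_image, Function.comp_def, add_assoc, Int.cast_add]

lemma run_rot {AP_I S : Type} [DecidableEq AP_I] (n : ℕ) [NeZero n]
    (δ : S → Finset (AP_I × ZMod n) → S) (k : ℤ) :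
    ∀ (t : List (Finset (AP_I × ZMod n))) (f : ZMod n → S),
      mooreRun (symProdδ n δ) (fun i => f (i - (k : ZMod n))) (rotW n t k) =
        fun i => mooreRun (symProdδ n δ) f t (i - (k : ZMod n)) := by
  intro t
  induction t with
  | nil => intro f; rfl
  | cons x ts ih =>
    intro f
    show mooreRun (symProdδ n δ)
        (symProdδ n δ (fun i => f (i - (k : ZMod n))) (rotL n x k)) (rotW n ts k) = _
    have hstep : symProdδ n δ (fun i => f (i - (k : ZMod n))) (rotL n x k)
        = fun i => symProdδ n δ f x (i - (k : ZMod n)) := by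
      funext i
      show δ (f (i - (k : ZMod n))) (rotL n (rotL n x k) (-(i.val : ℤ)))
          = δ (f (i - (k : ZMod n))) (rotL n x (-(((i - (k : ZMod n)).val : ℕ) : ℤ)))
      congr 1
      rw [rotL_rotL]
      apply rotL_congr
      push_cast [ZMod.intCast_zmod_cast, ZMod.natCast_val]
      ring
    rw [hstep, ih (fun i => symProdδ n δ f x i)]
    rfl

/-- The computation tree induced by the symmetric product of any Moore machine
(with finite state set) has the symmetry property. -/
theorem symProdTree_symmetry
    {AP_I AP_O : Type} [DecidableEq AP_I] [Fintype AP_I] [DecidableEq AP_O] [Fintype AP_O]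
    (n : ℕ) [NeZero n]
    (S : Type) [Fintype S] (δ : S → Finset (AP_I × ZMod n) → S) (s0 : S)
    (L : S → Finset AP_O) :
    ∀ (t : List (Finset (AP_I × ZMod n))) (i : ℕ), i < n →
      symProdTree n δ s0 L (rotW n t (i : ℤ)) = rotL n (symProdTree n δ s0 L t) (i : ℤ) := by
  intro t i _
  unfold symProdTree
  have hrun := run_rot n δ (i : ℤ) t (fun _ => s0)
  simp only at hrun
  rw [show (fun (_ : ZMod n) => s0) = (fun j => (fun (_ : ZMod n) => s0) (j - ((i : ℤ) : ZMod n))) from rfl,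
    hrun]
  ext ⟨a, j⟩
  simp only [symProdL, rotL, Finset.mem_filter, Finset.mem_univ, true_and, Finset.mem_image]
  constructor
  · intro h
    exact ⟨(a, j - ((i : ℤ) : ZMod n)), by simpa using h, by simp⟩
  · rintro ⟨⟨b, m⟩, hm, heq⟩
    simp only [Prod.mk.injEq] at heq
    obtain ⟨rfl, rfl⟩ := heq
    simp only [Finset.mem_filter, Finset.mem_univ, true_and] at hm
    simpa using hm
end

section
/- Every regular computation tree τ : I* → O with the symmetry property is induced by the symmetric product of some Moore machine: there exists a Moore machine M with finite state set, input alphabet I and output alphabet 2^(AP_O) such that the computation tree induced by the symmetric product of M is equal to τ. -/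
lemma rotL_cast_congr {AP : Type} [DecidableEq AP] (n : ℕ) (x : Finset (AP × ZMod n))
    {k k' : ℤ} (h : (k : ZMod n) = (k' : ZMod n)) : rotL n x k = rotL n x k' := by
  simp [rotL, h]

lemma rotW_cast_congr {AP : Type} [DecidableEq AP] (n : ℕ) (t : List (Finset (AP × ZMod n)))
    {k k' : ℤ} (h : (k : ZMod n) = (k' : ZMod n)) : rotW n t k = rotW n t k' := by
  unfold rotW
  exact List.map_congr_left (fun x _ => rotL_cast_congr n x h)

lemma mem_rotL {AP : Type} [DecidableEq AP] (n : ℕ) (x : Finset (AP × ZMod n)) (k : ℤ)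
    (a : AP) (j : ZMod n) : (a, j) ∈ rotL n x k ↔ (a, j - (k : ZMod n)) ∈ x := by
  simp only [rotL, Finset.mem_image, Prod.ext_iff]
  constructor
  · rintro ⟨⟨p, j'⟩, hp, rfl, h2⟩
    have : j' = j - (k : ZMod n) := by rw [← h2]; ring
    simpa [← this] using hp
  · intro h
    exact ⟨(a, j - (k : ZMod n)), h, rfl, by ring⟩

lemma mooreRun_symProd {AP_I S : Type} [DecidableEq AP_I] (n : ℕ)
    (δ : S → Finset (AP_I × ZMod n) → S) (f : ZMod n → S)
    (t : List (Finset (AP_I × ZMod n))) (i : ZMod n) :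
    mooreRun (symProdδ n δ) f t i = mooreRun δ (f i) (rotW n t (-(i.val : ℤ))) := by
  induction t generalizing f with
  | nil => rfl
  | cons x rest ih =>
      simpa [mooreRun, rotW, symProdδ] using ih (symProdδ n δ f x)

/-- Every regular computation tree with the symmetry property is induced by the
symmetric product of some Moore machine with finite state set. -/
theorem regular_symmetric_tree_is_symProdTree
    {AP_I AP_O : Type} [DecidableEq AP_I] [Fintype AP_I] [DecidableEq AP_O] [Fintype AP_O]
    (n : ℕ) [NeZero n]
    (τ : List (Finset (AP_I × ZMod n)) → Finset (AP_O × ZMod n))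
    (hreg : {g : List (Finset (AP_I × ZMod n)) → Finset (AP_O × ZMod n) |
      ∃ t, g = fun t' => τ (t ++ t')}.Finite)
    (hsym : ∀ (t : List (Finset (AP_I × ZMod n))) (i : ℕ), i < n →
      τ (rotW n t (i : ℤ)) = rotL n (τ t) (i : ℤ)) :
    ∃ (S : Type) (_ : Fintype S) (δ : S → Finset (AP_I × ZMod n) → S) (s0 : S)
      (L : S → Finset AP_O),
      ∀ t, τ t = symProdTree n δ s0 L t := by
  classical
  set Sub : Set (List (Finset (AP_I × ZMod n)) → Finset (AP_O × ZMod n)) :=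
    {g | ∃ t, g = fun t' => τ (t ++ t')} with hSub
  have hn : 0 < n := Nat.pos_of_ne_zero (NeZero.ne n)
  set δ : Sub → Finset (AP_I × ZMod n) → Sub :=
    fun g x => ⟨fun t' => g.val (x :: t'), by
      obtain ⟨t, ht⟩ := g.2
      exact ⟨t ++ [x], by funext t'; rw [ht]; simp⟩⟩ with hδ
  refine ⟨Sub, hreg.fintype, δ, ⟨τ, ⟨[], rfl⟩⟩,
    fun g => Finset.univ.filter (fun a => (a, (0 : ZMod n)) ∈ g.val []), ?_⟩
  have hrun : ∀ (w : List (Finset (AP_I × ZMod n))) (s : Sub)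
      (t' : List (Finset (AP_I × ZMod n))),
      (mooreRun δ s w).val t' = s.val (w ++ t') := by
    intro w
    induction w with
    | nil => intro s t'; rfl
    | cons x rest ih => intro s t'; simpa [mooreRun] using ih (δ s x) t'
  intro t
  ext ⟨a, i⟩
  have hi : i.val < n := ZMod.val_lt i
  set j : ℕ := (n - i.val) % n with hj
  have hjn : j < n := Nat.mod_lt _ hn
  have hcast : ((j : ℤ) : ZMod n) = ((-(i.val : ℤ) : ℤ) : ZMod n) := by
    have h1 : ((j : ℕ) : ZMod n) = -(i.val : ZMod n) := by
      rw [hj, ZMod.natCast_mod, Nat.cast_sub hi.le, ZMod.natCast_self, zero_sub]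
    push_cast
    rw [h1]
  have key : τ (rotW n t (-(i.val : ℤ))) = rotL n (τ t) (j : ℤ) := by
    rw [← rotW_cast_congr n t hcast]
    exact hsym t j hjn
  have hmem : ((a, (0 : ZMod n)) ∈ τ (rotW n t (-(i.val : ℤ)))) ↔ (a, i) ∈ τ t := by
    rw [key, mem_rotL]
    have h0 : (0 : ZMod n) - ((j : ℤ) : ZMod n) = i := by
      rw [hcast]
      push_cast
      simp [ZMod.natCast_val, ZMod.cast_id]
    rw [h0]
  simp only [symProdTree, symProdL, Finset.mem_filter, Finset.mem_univ, true_and]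
  rw [mooreRun_symProd, hrun]
  simp only [List.append_nil]
  rw [hmem]
end

section
/- Let τ : I* → O be a computation tree such that reps(t) divides rep(τ(t)) for every t ∈ I*. Then for all t ∈ I* and all integers i, j, if rot(t,i) = rot(t,j) then rot(τ(t),i) = rot(τ(t),j). (Hence labels can be consistently transported along rotations of input words.) -/
/-- rotation by a `ZMod n` element -/
def rotZ {AP : Type} [DecidableEq AP] {n : ℕ} (x : Finset (AP × ZMod n)) (c : ZMod n) :
    Finset (AP × ZMod n) :=
  x.image (fun pj => (pj.1, pj.2 + c))

lemma rotL_eq_rotZ {AP : Type} [DecidableEq AP] (n : ℕ) (x : Finset (AP × ZMod n)) (k : ℤ) :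
    rotL n x k = rotZ x (k : ZMod n) := rfl

lemma rotZ_zero {AP : Type} [DecidableEq AP] {n : ℕ} (x : Finset (AP × ZMod n)) :
    rotZ x 0 = x := by
  simp [rotZ]

lemma rotZ_rotZ {AP : Type} [DecidableEq AP] {n : ℕ} (x : Finset (AP × ZMod n)) (a b : ZMod n) :
    rotZ (rotZ x a) b = rotZ x (a + b) := by
  rw [rotZ, rotZ, rotZ, Finset.image_image]
  congr 1
  funext pj
  simp [add_assoc]

/-- stabilizer subgroup of a letter -/
def Stab {AP : Type} [DecidableEq AP] {n : ℕ} (x : Finset (AP × ZMod n)) :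
    AddSubgroup (ZMod n) where
  carrier := {c | rotZ x c = x}
  zero_mem' := rotZ_zero x
  add_mem' := by
    intro a b ha hb
    simp only [Set.mem_setOf_eq] at *
    rw [← rotZ_rotZ, ha, hb]
  neg_mem' := by
    intro a ha
    simp only [Set.mem_setOf_eq] at *
    conv_lhs => rw [← ha]
    rw [rotZ_rotZ, add_neg_cancel, rotZ_zero]

lemma mem_Stab_iff {AP : Type} [DecidableEq AP] {n : ℕ} (x : Finset (AP × ZMod n)) (c : ZMod n) :
    c ∈ Stab x ↔ rotZ x c = x := Iff.rfl

lemma rep_eq_card_stab {AP : Type} [DecidableEq AP] {n : ℕ} (hn : 1 ≤ n)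
    (x : Finset (AP × ZMod n)) :
    rep n x = Nat.card (Stab x) := by
  haveI : NeZero n := ⟨by omega⟩
  classical
  rw [show Nat.card (Stab x) = Nat.card ((Stab x : Set (ZMod n))) from (Nat.card_congr (Equiv.setCongr rfl)), Nat.card_coe_set_eq, Set.ncard_eq_toFinset_card', rep]
  apply Finset.card_bij (fun j _ => ((j : ℕ) : ZMod n))
  · intro a ha
    simp only [Finset.mem_filter] at ha
    simp only [Set.mem_toFinset]
    have hcast : (((a : ℕ) : ℤ) : ZMod n) = ((a : ℕ) : ZMod n) := by push_cast; ring
    show rotZ x ((a : ℕ) : ZMod n) = x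
    rw [← hcast]
    exact ha.2
  · intro a ha b hb hab
    simp only [Finset.mem_filter, Finset.mem_range] at ha hb
    have := congrArg ZMod.val hab
    rwa [ZMod.val_cast_of_lt ha.1, ZMod.val_cast_of_lt hb.1] at this
  · intro c hc
    refine ⟨c.val, ?_, by simp [ZMod.natCast_val, ZMod.cast_id]⟩
    simp only [Set.mem_toFinset] at hc
    have hc2 : rotZ x c = x := hc
    simp only [Finset.mem_filter, Finset.mem_range]
    refine ⟨ZMod.val_lt c, ?_⟩
    show rotZ x (((c.val : ℕ) : ℤ) : ZMod n) = x
    have h2 : (((c.val : ℕ) : ℤ) : ZMod n) = c := by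
      push_cast; simp [ZMod.natCast_val, ZMod.cast_id]
    rw [h2]
    exact hc2

/-- in a finite cyclic group, membership in a subgroup is equivalent to order dividing card -/
lemma mem_iff_addOrderOf_dvd {G : Type} [AddCommGroup G] [Fintype G] [DecidableEq G]
    [IsAddCyclic G] (H : AddSubgroup G) (c : G) :
    c ∈ H ↔ addOrderOf c ∣ Nat.card H := by
  classical
  set k := Nat.card H with hk
  have hk0 : 0 < k := Nat.card_pos
  set T : Finset G := Finset.univ.filter (fun a => k • a = 0) with hT
  have hsub : (H : Set G).toFinset ⊆ T := by
    intro a ha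
    simp only [Set.mem_toFinset, SetLike.mem_coe] at ha
    simp only [hT, Finset.mem_filter, Finset.mem_univ, true_and]
    rw [← addOrderOf_dvd_iff_nsmul_eq_zero]
    exact AddSubgroup.addOrderOf_dvd_natCard H ha
  have hcardT : T.card ≤ k := IsAddCyclic.card_nsmul_eq_zero_le hk0
  have hcardH : (H : Set G).toFinset.card = k := by
    rw [Set.toFinset_card, hk, Nat.card_eq_fintype_card]
    exact Fintype.card_congr (Equiv.setCongr rfl)
  have heq : (H : Set G).toFinset = T :=
    Finset.eq_of_subset_of_card_le hsub (by rw [hcardH]; exact hcardT)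
  constructor
  · intro hc
    have : c ∈ T := heq ▸ (by simp only [Set.mem_toFinset, SetLike.mem_coe]; exact hc)
    simp only [hT, Finset.mem_filter] at this
    rw [addOrderOf_dvd_iff_nsmul_eq_zero]
    exact this.2
  · intro hd
    have : c ∈ T := by
      simp only [hT, Finset.mem_filter, Finset.mem_univ, true_and]
      rw [← addOrderOf_dvd_iff_nsmul_eq_zero]; exact hd
    rw [← heq] at this
    simpa using this

lemma dvd_foldl_gcd {AP : Type} [DecidableEq AP] {n : ℕ} (d : ℕ)
    (t : List (Finset (AP × ZMod n))) :
    ∀ a : ℕ, d ∣ a → (∀ x ∈ t, d ∣ rep n x) →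
      d ∣ t.foldl (fun a x => Nat.gcd a (rep n x)) a := by
  induction t with
  | nil => intro a ha _; exact ha
  | cons x t ih =>
    intro a ha hx
    simp only [List.foldl_cons]
    exact ih _ (Nat.dvd_gcd ha (hx x (by simp))) (fun y hy => hx y (by simp [hy]))

lemma addOrderOf_dvd_reps {AP : Type} [DecidableEq AP] {n : ℕ} (hn : 1 ≤ n)
    (t : List (Finset (AP × ZMod n))) (c : ZMod n)
    (hc : ∀ x ∈ t, c ∈ Stab x) : addOrderOf c ∣ reps n t := by
  haveI : NeZero n := ⟨by omega⟩
  have hbase : addOrderOf c ∣ n := by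
    have := addOrderOf_dvd_card (x := c)
    rwa [ZMod.card] at this
  refine dvd_foldl_gcd _ t n hbase (fun x hx => ?_)
  rw [rep_eq_card_stab hn]
  exact AddSubgroup.addOrderOf_dvd_natCard _ (hc x hx)


/-- If `reps(t) ∣ rep(τ(t))` for every `t`, then equal rotations of an input word
yield equal rotations of its label: labels can be consistently transported along
rotations of input words. -/
theorem label_rotation_consistent
    {AP_I AP_O : Type} [DecidableEq AP_I] [Fintype AP_I] [DecidableEq AP_O] [Fintype AP_O]
    (n : ℕ) (hn : 1 ≤ n)
    (τ : List (Finset (AP_I × ZMod n)) → Finset (AP_O × ZMod n))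
    (hdvd : ∀ t, reps n t ∣ rep n (τ t)) :
    ∀ (t : List (Finset (AP_I × ZMod n))) (i j : ℤ),
      rotW n t i = rotW n t j → rotL n (τ t) i = rotL n (τ t) j := by
  intro t i j h
  haveI : NeZero n := ⟨by omega⟩
  set c : ZMod n := ((i - j : ℤ) : ZMod n) with hc
  have hstab : ∀ x ∈ t, c ∈ Stab x := by
    intro x hx
    have hxij : rotL n x i = rotL n x j := List.map_inj_left.mp h x hx
    rw [rotL_eq_rotZ, rotL_eq_rotZ] at hxij
    rw [mem_Stab_iff]
    have h2 : rotZ (rotZ x (i : ZMod n)) (-(j : ZMod n))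
        = rotZ (rotZ x (j : ZMod n)) (-(j : ZMod n)) := by rw [hxij]
    rw [rotZ_rotZ, rotZ_rotZ, add_neg_cancel, rotZ_zero] at h2
    have hcc : c = (i : ZMod n) + -(j : ZMod n) := by rw [hc]; push_cast; ring
    rw [hcc]; exact h2
  have h1 : addOrderOf c ∣ reps n t := addOrderOf_dvd_reps hn t c hstab
  have h2 : addOrderOf c ∣ rep n (τ t) := h1.trans (hdvd t)
  rw [rep_eq_card_stab hn] at h2
  have h3 : c ∈ Stab (τ t) := (mem_iff_addOrderOf_dvd (Stab (τ t)) c).mpr h2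
  rw [mem_Stab_iff] at h3
  rw [rotL_eq_rotZ, rotL_eq_rotZ]
  have h4 : rotZ (rotZ (τ t) c) (j : ZMod n) = rotZ (τ t) (i : ZMod n) := by
    rw [rotZ_rotZ]
    congr 1
    rw [hc]; push_cast; ring
  rw [h3] at h4
  rw [← h4]
end

section
/- Let τ : I* → O be a computation tree such that reps(t) divides rep(τ(t)) for every t ∈ I*. If τ is regular (has only finitely many distinct subtrees), then the symmetric completion τ' of τ is also regular. -/
/-- `η(t) = min_{0 ≤ i < n} rot(t,i)` with respect to the lexicographic order on words. -/
def eta {AP : Type} [DecidableEq AP] (n : ℕ) [NeZero n]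
    [LinearOrder (Finset (AP × ZMod n))] (t : List (Finset (AP × ZMod n))) :
    List (Finset (AP × ZMod n)) :=
  ((Finset.range n).image (fun i : ℕ => rotW n t ((i : ℤ)))).min'
    ((Finset.nonempty_range_iff.mpr (NeZero.ne n)).image _)

/-- A word is normalized if it equals the minimum of its rotations. -/
def normalized {AP : Type} [DecidableEq AP] (n : ℕ) [NeZero n]
    [LinearOrder (Finset (AP × ZMod n))] (t : List (Finset (AP × ZMod n))) : Prop :=
  eta n t = t

/-- The least `i ∈ {0,…,n−1}` with `rot(s,i) = t`. -/
noncomputable def leastRotIdx {AP : Type} [DecidableEq AP] (n : ℕ)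
    (s t : List (Finset (AP × ZMod n))) : ℕ := by
  classical
  exact if h : ∃ i : ℕ, i < n ∧ rotW n s ((i : ℤ)) = t then Nat.find h else 0

/-- The symmetric completion `τ'` of `τ`:
`τ'(t) = rot(τ(η(t)), i_t)` where `i_t` is the least `i ∈ {0,…,n−1}` with `rot(η(t),i) = t`. -/
noncomputable def symComp {AP_I AP_O : Type} [DecidableEq AP_I] [DecidableEq AP_O]
    (n : ℕ) [NeZero n] [LinearOrder (Finset (AP_I × ZMod n))]
    (τ : List (Finset (AP_I × ZMod n)) → Finset (AP_O × ZMod n)) :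
    List (Finset (AP_I × ZMod n)) → Finset (AP_O × ZMod n) :=
  fun t => rotL n (τ (eta n t)) ((leastRotIdx n (eta n t) t : ℤ))

/-- A computation tree is regular if it has only finitely many distinct subtrees. -/
def regularTree {AP_I AP_O : Type} [DecidableEq AP_I] (n : ℕ)
    (τ : List (Finset (AP_I × ZMod n)) → Finset (AP_O × ZMod n)) : Prop :=
  {g : List (Finset (AP_I × ZMod n)) → Finset (AP_O × ZMod n) |
    ∃ t, g = fun t' => τ (t ++ t')}.Finite

/- The lexicographic minimum of the rotations of `t ++ u` is `η(t)` followed by the least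
rotation of `u` among those indices that send `t` to `η(t)`; and a rotation sends
`η(t) ++ s` to `t ++ u` exactly when it sends `η(t)` to `t` and `s` to `u`. So the subtree of
`τ'` at `t` is determined by the subtree of `τ` at `η(t)` and by two subsets of
`{0, …, n-1}`, which leaves only finitely many possibilities. -/

namespace List

variable {α : Type*}

theorem append_lt_append_of_lt_of_length_eq [LT α] :
    ∀ {a b : List α}, a < b → a.length = b.length → ∀ c d : List α, a ++ c < b ++ d
  | _, _, .nil, h, _, _ => by simp at h
  | _, _, .cons h, hlen, c, d =>
    .cons (append_lt_append_of_lt_of_length_eq h (by simpa using hlen) c d)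
  | _, _, .rel h, _, _, _ => .rel h

theorem append_le_append_left [LinearOrder α] {b c : List α} (h : b ≤ c) (a : List α) :
    a ++ b ≤ a ++ c :=
  h.lt_or_eq.elim (fun h => le_of_lt (Lex.append_left _ h a)) (fun h => h ▸ le_rfl)

end List

theorem IsLeast.image_append {ι α : Type*} [LinearOrder α] {S : Set ι} {f g : ι → List α}
    {m m' : List α} (hf : IsLeast (f '' S) m) (hlen : ∀ i ∈ S, (f i).length = m.length)
    (hg : IsLeast (g '' {i ∈ S | f i = m}) m') :
    IsLeast ((fun i => f i ++ g i) '' S) (m ++ m') := by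
  refine ⟨?_, ?_⟩
  · obtain ⟨i, ⟨hiS, hfi⟩, hgi⟩ := hg.1
    exact ⟨i, hiS, by simp only [hfi, hgi]⟩
  · rintro _ ⟨i, hiS, rfl⟩
    rcases (hf.2 ⟨i, hiS, rfl⟩).lt_or_eq with hlt | heq
    · exact (List.append_lt_append_of_lt_of_length_eq hlt (hlen i hiS).symm _ _).le
    · simp only [← heq]
      exact List.append_le_append_left (hg.2 ⟨i, ⟨hiS, heq.symm⟩, rfl⟩) _

section Rotations

variable {AP : Type} [DecidableEq AP] (n : ℕ)

theorem rotW_append (s t : List (Finset (AP × ZMod n))) (k : ℤ) :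
    rotW n (s ++ t) k = rotW n s k ++ rotW n t k :=
  List.map_append

theorem length_rotW (t : List (Finset (AP × ZMod n))) (k : ℤ) : (rotW n t k).length = t.length :=
  List.length_map _

def rotsBetween (s t : List (Finset (AP × ZMod n))) : Finset ℕ :=
  (Finset.range n).filter fun i => rotW n s i = t

theorem rotsBetween_subset_range (s t : List (Finset (AP × ZMod n))) :
    rotsBetween n s t ⊆ Finset.range n :=
  Finset.filter_subset _ _

open Classical in
noncomputable def leastRotIdxOn (D : Finset ℕ) (s t : List (Finset (AP × ZMod n))) : ℕ :=
  if h : ∃ i, i ∈ D ∧ rotW n s i = t then Nat.find h else 0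

theorem leastRotIdx_append {a c : List (Finset (AP × ZMod n))} (hlen : a.length = c.length)
    (b d : List (Finset (AP × ZMod n))) :
    leastRotIdx n (a ++ b) (c ++ d) = leastRotIdxOn n (rotsBetween n a c) b d := by
  have hiff : ∀ i, (i < n ∧ rotW n (a ++ b) i = c ++ d) ↔
      (i ∈ rotsBetween n a c ∧ rotW n b i = d) := by
    intro i
    rw [rotW_append, rotsBetween, Finset.mem_filter, Finset.mem_range, and_assoc]
    exact and_congr_right fun _ =>
      ⟨fun h => List.append_inj h (by rw [length_rotW, hlen]), fun h => by rw [h.1, h.2]⟩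
  simp only [leastRotIdx, leastRotIdxOn, hiff]

variable [LinearOrder (Finset (AP × ZMod n))]

noncomputable def minRotOn (C : Finset ℕ) (u : List (Finset (AP × ZMod n))) :
    List (Finset (AP × ZMod n)) :=
  if h : C.Nonempty then (C.image fun i : ℕ => rotW n u i).min' (h.image _) else u

theorem isLeast_minRotOn {C : Finset ℕ} (hC : C.Nonempty) (u : List (Finset (AP × ZMod n))) :
    IsLeast ((fun i : ℕ => rotW n u i) '' C) (minRotOn n C u) := by
  rw [minRotOn, dif_pos hC, ← Finset.coe_image]
  exact Finset.isLeast_min' _ _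

variable [NeZero n]

theorem isLeast_eta (t : List (Finset (AP × ZMod n))) :
    IsLeast ((fun i : ℕ => rotW n t i) '' Set.Iio n) (eta n t) := by
  rw [eta, ← Finset.coe_range, ← Finset.coe_image]
  exact Finset.isLeast_min' _ _

theorem length_eta (t : List (Finset (AP × ZMod n))) : (eta n t).length = t.length := by
  obtain ⟨i, -, h⟩ := (isLeast_eta n t).1
  rw [← h, length_rotW]

theorem eta_append (t u : List (Finset (AP × ZMod n))) :
    eta n (t ++ u) = eta n t ++ minRotOn n (rotsBetween n t (eta n t)) u := by
  have hC : (rotsBetween n t (eta n t)).Nonempty := by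
    obtain ⟨i, hi, h⟩ := (isLeast_eta n t).1
    exact ⟨i, Finset.mem_filter.2 ⟨Finset.mem_range.2 hi, h⟩⟩
  refine (isLeast_eta n (t ++ u)).unique ?_
  simp only [rotW_append]
  refine (isLeast_eta n t).image_append (fun i _ => by rw [length_rotW, length_eta]) ?_
  convert isLeast_minRotOn n hC u using 2
  ext i
  simp [rotsBetween]

end Rotations

section Completion

variable {AP_I AP_O : Type} [DecidableEq AP_I] [DecidableEq AP_O] (n : ℕ)
  [LinearOrder (Finset (AP_I × ZMod n))]

noncomputable def completionSubtree
    (σ : List (Finset (AP_I × ZMod n)) → Finset (AP_O × ZMod n)) (C D : Finset ℕ) : List (Finset (AP_I × ZMod n)) → Finset (AP_O × ZMod n) :=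
  fun u => rotL n (σ (minRotOn n C u)) (leastRotIdxOn n D (minRotOn n C u) u)

theorem subtree_symComp [NeZero n]
    (τ : List (Finset (AP_I × ZMod n)) → Finset (AP_O × ZMod n))
    (t : List (Finset (AP_I × ZMod n))) :
    (fun u => symComp n τ (t ++ u)) =
      completionSubtree n (fun u => τ (eta n t ++ u))
        (rotsBetween n t (eta n t)) (rotsBetween n (eta n t) t) := by
  funext u
  rw [symComp, eta_append, leastRotIdx_append n (length_eta n t), completionSubtree]

end Completion

theorem symComp_regular_general
    {AP_I AP_O : Type} [DecidableEq AP_I] [DecidableEq AP_O]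
    (n : ℕ) [NeZero n] [LinearOrder (Finset (AP_I × ZMod n))]
    (τ : List (Finset (AP_I × ZMod n)) → Finset (AP_O × ZMod n))
    (hreg : regularTree n τ) :
    regularTree n (symComp n τ) := by
  have hfin : ((Finset.range n).powerset : Set (Finset ℕ)).Finite := Finset.finite_toSet _
  refine ((hreg.prod (hfin.prod hfin)).image
    fun p => completionSubtree n p.1 p.2.1 p.2.2).subset ?_
  rintro _ ⟨t, rfl⟩
  refine ⟨(_, _, _), ⟨⟨eta n t, rfl⟩, ?_, ?_⟩, (subtree_symComp n τ t).symm⟩ <;>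
    exact Finset.mem_powerset.2 (rotsBetween_subset_range n _ _)

/-- If `reps(t) ∣ rep(τ(t))` for every `t` and `τ` is regular, then the symmetric
completion of `τ` is also regular. -/
theorem symComp_regular
    {AP_I AP_O : Type} [DecidableEq AP_I] [Fintype AP_I] [DecidableEq AP_O] [Fintype AP_O]
    (n : ℕ) [NeZero n] [LinearOrder (Finset (AP_I × ZMod n))]
    (τ : List (Finset (AP_I × ZMod n)) → Finset (AP_O × ZMod n))
    (hdvd : ∀ t, reps n t ∣ rep n (τ t))
    (hreg : regularTree n τ) :
    regularTree n (symComp n τ) :=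
  symComp_regular_general n τ hreg
end

section
/- For every infinite word ρ ∈ I^ω there exists some i ∈ {0,…,n−1} such that every finite prefix of the rotated word rot(ρ,i) is normalized. -/
/-! ### Auxiliary lemmas -/

/-- Lex order is reflected by `take`. -/
lemma lex_of_take_lex {α : Type*} {r : α → α → Prop} :
    ∀ {m : ℕ} {s t : List α}, List.Lex r (s.take m) (t.take m) → List.Lex r s t := by
  intro m
  induction m with
  | zero => intro s t h; simp at h
  | succ m ih =>
    intro s t h
    match s, t with
    | [], [] => simp at h
    | [], b :: bs => exact List.Lex.nil
    | a :: as, [] => simp at h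
    | a :: as, b :: bs =>
      simp only [List.take_succ_cons] at h
      cases h with
      | rel hr => exact List.Lex.rel hr
      | cons h' => exact List.Lex.cons (ih h')

lemma take_le_take {α : Type*} [LinearOrder α] {s t : List α} (h : s ≤ t) (m : ℕ) :
    s.take m ≤ t.take m := by
  by_contra hc
  have hlt : t.take m < s.take m := lt_of_not_ge hc
  have : t < s := lex_of_take_lex (r := (· < ·)) hlt
  exact absurd h (not_le_of_gt this)

section Aux

variable {AP : Type} [DecidableEq AP] (n : ℕ) [NeZero n]
  [LinearOrder (Finset (AP × ZMod n))] (ρ : ℕ → Finset (AP × ZMod n))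

/-- The length-`k` prefix of `ρ` rotated by `c`. -/
def Qw (c : ZMod n) (k : ℕ) : List (Finset (AP × ZMod n)) :=
  (List.range k).map (fun m => (ρ m).image (fun pj => (pj.1, pj.2 + c)))

lemma rotW_Qw (c : ZMod n) (k : ℕ) (j : ℤ) :
    rotW n (Qw n ρ c k) j = Qw n ρ (c + j) k := by
  simp only [Qw, rotW, rotL, List.map_map]
  refine List.map_congr_left fun m _ => ?_
  simp [Function.comp_def, Finset.image_image, add_assoc]

lemma Qw_take {c : ZMod n} {k k' : ℕ} (h : k ≤ k') :
    (Qw n ρ c k').take k = Qw n ρ c k := by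
  simp [Qw, ← List.map_take, List.take_range, Nat.min_eq_left h]

lemma eta_Qw_le (c c' : ZMod n) (k : ℕ) :
    eta n (Qw n ρ c k) ≤ Qw n ρ c' k := by
  apply Finset.min'_le
  rw [Finset.mem_image]
  refine ⟨(c' - c).val, Finset.mem_range.mpr (ZMod.val_lt _), ?_⟩
  rw [rotW_Qw]
  congr 1
  push_cast
  rw [ZMod.natCast_zmod_val]
  ring

lemma eta_Qw_mem (c : ZMod n) (k : ℕ) :
    ∃ a : ZMod n, eta n (Qw n ρ c k) = Qw n ρ a k := by
  have h := Finset.min'_mem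
    ((Finset.range n).image (fun i : ℕ => rotW n (Qw n ρ c k) ((i : ℤ))))
    ((Finset.nonempty_range_iff.mpr (NeZero.ne n)).image _)
  rw [Finset.mem_image] at h
  obtain ⟨j, _, hj⟩ := h
  exact ⟨c + (j : ℤ), by rw [eta, ← hj, rotW_Qw]⟩

lemma eta_Qw_const (c : ZMod n) (k : ℕ) :
    eta n (Qw n ρ c k) = eta n (Qw n ρ 0 k) := by
  obtain ⟨a, ha⟩ := eta_Qw_mem n ρ c k
  obtain ⟨b, hb⟩ := eta_Qw_mem n ρ 0 k
  refine le_antisymm ?_ ?_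
  · rw [hb]; exact eta_Qw_le n ρ c b k
  · rw [ha]; exact eta_Qw_le n ρ 0 a k

lemma normalized_Qw_iff (c : ZMod n) (k : ℕ) :
    normalized n (Qw n ρ c k) ↔ eta n (Qw n ρ 0 k) = Qw n ρ c k := by
  rw [normalized, eta_Qw_const]

end Aux

/-- For every infinite word `ρ ∈ I^ω` there is some `i ∈ {0,…,n−1}` such that every
finite prefix of `rot(ρ,i)` is normalized. -/
theorem exists_rotation_all_prefixes_normalized
    {AP : Type} [DecidableEq AP] [Fintype AP] (n : ℕ) [NeZero n]
    [LinearOrder (Finset (AP × ZMod n))]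
    (ρ : ℕ → Finset (AP × ZMod n)) :
    ∃ i : ℕ, i < n ∧
      ∀ k : ℕ, normalized n ((List.range k).map (fun m => rotL n (ρ m) ((i : ℤ)))) := by
  -- the common minimum over all rotations
  set M : ℕ → List (Finset (AP × ZMod n)) := fun k => eta n (Qw n ρ 0 k) with hM
  -- choose for each k a rotation realizing the minimum
  have hch : ∀ k : ℕ, ∃ a : ZMod n, M k = Qw n ρ a k := fun k => eta_Qw_mem n ρ 0 k
  choose f hf using hch
  -- pigeonhole: some rotation realizes the minimum for infinitely many k
  obtain ⟨c, hc⟩ := Finite.exists_infinite_fiber f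
  rw [Set.infinite_coe_iff] at hc
  refine ⟨c.val, ZMod.val_lt c, fun k => ?_⟩
  -- rewrite the goal list as `Qw n ρ c k`
  have hlist : ((List.range k).map (fun m => rotL n (ρ m) ((c.val : ℤ)))) = Qw n ρ c k := by
    unfold Qw rotL
    refine List.map_congr_left fun m _ => ?_
    congr 1
    push_cast
    rw [ZMod.natCast_zmod_val]
  rw [hlist, normalized_Qw_iff]
  -- find k' ≥ k where c realizes the minimum
  obtain ⟨k', hk'mem, hkk'⟩ := hc.exists_gt k
  have hk : k ≤ k' := hkk'.le
  have hck' : M k' = Qw n ρ c k' := by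
    have : f k' = c := hk'mem
    rw [← this]; exact hf k'
  -- `Qw c k ≤ M k`
  have h1 : Qw n ρ c k ≤ M k := by
    rw [hf k]
    have hle : Qw n ρ c k' ≤ Qw n ρ (f k) k' := by
      rw [← hck']; exact eta_Qw_le n ρ 0 (f k) k'
    have := take_le_take hle k
    rwa [Qw_take n ρ hk, Qw_take n ρ hk] at this
  have h2 : M k ≤ Qw n ρ c k := eta_Qw_le n ρ 0 c k
  exact le_antisymm h2 h1
end

section
/- For n = 2 processes with AP_I and AP_O singletons (so I = 2^(AP_I × {0,1}) and O = 2^(AP_O × {0,1})), the set of computation trees τ : I* → O having the symmetry property is not a regular tree language: there is no nondeterministic Muller tree automaton over O-labeled I-branching trees whose accepted trees are exactly the trees with the symmetry property. -/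
/-- A nondeterministic Muller tree automaton over `O`-labeled `I`-branching trees. -/
structure MullerTreeAutomaton (I O : Type) where
  Q : Type
  finQ : Fintype Q
  q0 : Q
  Δ : Set (Q × O × (I → Q))
  F : Set (Set Q)

/-- `r` is a run of the automaton `A` on the tree `τ`. -/
def MullerTreeAutomaton.IsRun {I O : Type} (A : MullerTreeAutomaton I O)
    (τ : List I → O) (r : List I → A.Q) : Prop :=
  r [] = A.q0 ∧ ∀ t : List I, (r t, τ t, fun x => r (t ++ [x])) ∈ A.Δ

/-- A run is accepting if along every infinite branch the set of states occurring
infinitely often belongs to `F`. -/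
def MullerTreeAutomaton.IsAcceptingRun {I O : Type} (A : MullerTreeAutomaton I O)
    (τ : List I → O) (r : List I → A.Q) : Prop :=
  A.IsRun τ r ∧
    ∀ ρ : ℕ → I, {q : A.Q | ∀ N : ℕ, ∃ k ≥ N, r ((List.range k).map ρ) = q} ∈ A.F

/-- `A` accepts the tree `τ`. -/
def MullerTreeAutomaton.Accepts {I O : Type} (A : MullerTreeAutomaton I O)
    (τ : List I → O) : Prop :=
  ∃ r : List I → A.Q, A.IsAcceptingRun τ r

namespace SymNotReg

abbrev L := Finset (Unit × ZMod 2)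

def la : L := {((), 0)}
def lb : L := {((), 1)}

lemma la_ne_lb : la ≠ lb := by decide

lemma rotL_zero : ∀ x : L, rotL 2 x (0:ℤ) = x := by decide

lemma rotL_one_a : rotL 2 la (1:ℤ) = lb := by decide

lemma rotL_one_b : rotL 2 lb (1:ℤ) = la := by decide

lemma rotL_one_empty : rotL 2 (∅ : L) (1:ℤ) = ∅ := by decide

lemma rotL_invol : ∀ x : L, rotL 2 (rotL 2 x (1:ℤ)) (1:ℤ) = x := by decide

lemma rotW_zero (t : List L) : rotW 2 t (0:ℤ) = t := by
  simp [rotW, rotL_zero]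

lemma rotW_invol (t : List L) : rotW 2 (rotW 2 t (1:ℤ)) (1:ℤ) = t := by
  simp [rotW, List.map_map, Function.comp_def, rotL_invol]

lemma rotW_length (t : List L) (k : ℤ) : (rotW 2 t k).length = t.length := by
  simp [rotW]

lemma rotW_replicate (n : ℕ) (x : L) (k : ℤ) :
    rotW 2 (List.replicate n x) k = List.replicate n (rotL 2 x k) := by
  simp [rotW]

/-- `sqb n` : `n` is a positive perfect square. -/
def sqb (n : ℕ) : Bool := decide (0 < n ∧ Nat.sqrt n * Nat.sqrt n = n)

lemma sqb_pos {n : ℕ} (h : sqb n = true) : 0 < n := by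
  simp [sqb] at h; exact h.1

lemma sqb_sq (k : ℕ) (hk : 0 < k) : sqb (k * k) = true := by
  have h : Nat.sqrt (k * k) = k := by
    have := Nat.sqrt_eq' k
    simpa [pow_two] using this
  simp [sqb, h, Nat.mul_pos hk hk]

lemma sqb_not (k d : ℕ) (h1 : 0 < d) (h2 : d ≤ k) : sqb (k * k + d) = false := by
  by_contra h
  have h' : sqb (k * k + d) = true := by
    cases hb : sqb (k * k + d) with
    | false => exact absurd hb h
    | true => rfl
  simp only [sqb, decide_eq_true_eq] at h'
  obtain ⟨-, hm⟩ := h'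
  set m := Nat.sqrt (k * k + d) with hmdef
  have hk_lt : k < m := by nlinarith
  have : k + 1 ≤ m := hk_lt
  nlinarith

/-- The symmetric witness tree. -/
def tau (t : List L) : L :=
  if t = List.replicate t.length la ∧ sqb t.length = true then la
  else if t = List.replicate t.length lb ∧ sqb t.length = true then lb
  else ∅

lemma repl_ne (j : ℕ) (hj : 0 < j) : List.replicate j la ≠ List.replicate j lb := by
  intro h
  exact la_ne_lb (List.replicate_right_injective hj.ne' h)

lemma tau_repl_a {j : ℕ} (h : sqb j = true) : tau (List.replicate j la) = la := by
  simp only [tau, List.length_replicate]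
  rw [if_pos ⟨trivial, h⟩]

lemma tau_repl_b {j : ℕ} (h : sqb j = true) : tau (List.replicate j lb) = lb := by
  have hj : 0 < j := sqb_pos h
  simp only [tau, List.length_replicate]
  rw [if_neg, if_pos ⟨trivial, h⟩]
  rintro ⟨he, -⟩
  exact repl_ne j hj he.symm

lemma tau_repl_a_not {j : ℕ} (h : sqb j = false) : tau (List.replicate j la) = ∅ := by
  simp only [tau, List.length_replicate, h]
  simp

lemma tau_repl_b_not {j : ℕ} (h : sqb j = false) : tau (List.replicate j lb) = ∅ := by
  simp only [tau, List.length_replicate, h]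
  simp

/-- `tau` has the symmetry property. -/
lemma tau_symm : ∀ (t : List L) (i : ℕ), i < 2 →
    tau (rotW 2 t ((i:ℕ):ℤ)) = rotL 2 (tau t) ((i:ℕ):ℤ) := by
  intro t i hi
  interval_cases i
  · simp only [Nat.cast_zero]
    rw [rotW_zero, rotL_zero]
  · -- i = 1
    simp only [Nat.cast_one]
    have hlen : (rotW 2 t (1:ℤ)).length = t.length := rotW_length t _
    have hiff_a : rotW 2 t (1:ℤ) = List.replicate t.length la ↔
        t = List.replicate t.length lb := by
      constructor
      · intro h
        have := congrArg (fun s => rotW 2 s (1:ℤ)) h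
        simp only [rotW_invol] at this
        rw [this, rotW_replicate, rotL_one_a]
        simp
      · intro h
        conv_lhs => rw [h]
        rw [rotW_replicate, rotL_one_b]
    have hiff_b : rotW 2 t (1:ℤ) = List.replicate t.length lb ↔
        t = List.replicate t.length la := by
      constructor
      · intro h
        have := congrArg (fun s => rotW 2 s (1:ℤ)) h
        simp only [rotW_invol] at this
        rw [this, rotW_replicate, rotL_one_b]
        simp
      · intro h
        conv_lhs => rw [h]
        rw [rotW_replicate, rotL_one_a]
    by_cases h1 : t = List.replicate t.length la ∧ sqb t.length = true
    · obtain ⟨ht, hs⟩ := h1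
      have hv : tau t = la := by conv_lhs => rw [ht]; rw [tau_repl_a hs]
      rw [hv, rotL_one_a]
      have : rotW 2 t (1:ℤ) = List.replicate t.length lb := hiff_b.mpr ht
      rw [this]
      exact tau_repl_b hs
    · by_cases h2 : t = List.replicate t.length lb ∧ sqb t.length = true
      · obtain ⟨ht, hs⟩ := h2
        have hv : tau t = lb := by conv_lhs => rw [ht]; rw [tau_repl_b hs]
        rw [hv, rotL_one_b]
        have : rotW 2 t (1:ℤ) = List.replicate t.length la := hiff_a.mpr ht
        rw [this]
        exact tau_repl_a hs
      · have hv : tau t = ∅ := by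
          simp only [tau]
          rw [if_neg h1, if_neg h2]
        have hv' : tau (rotW 2 t (1:ℤ)) = ∅ := by
          simp only [tau, hlen]
          rw [if_neg, if_neg]
          · rintro ⟨he, hs⟩
            exact h1 ⟨hiff_b.mp he, hs⟩
          · rintro ⟨he, hs⟩
            exact h2 ⟨hiff_a.mp he, hs⟩
        rw [hv, hv', rotL_one_empty]

end SymNotReg

namespace SymNotReg

/-- Splice: redirect the subtree at `a^{j2}` to the subtree at `a^{j1}`. -/
def splice {Q : Type} (j1 j2 : ℕ) (f : List L → Q) : List L → Q :=
  fun t => if List.replicate j2 la <+: t then f (List.replicate j1 la ++ t.drop j2) else f t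

lemma splice_of_prefix {Q : Type} (j1 j2 : ℕ) (f : List L → Q) {t : List L}
    (h : List.replicate j2 la <+: t) :
    splice j1 j2 f t = f (List.replicate j1 la ++ t.drop j2) := by
  simp [splice, h]

lemma splice_of_not_prefix {Q : Type} (j1 j2 : ℕ) (f : List L → Q) {t : List L}
    (h : ¬ List.replicate j2 la <+: t) :
    splice j1 j2 f t = f t := by
  simp [splice, h]

lemma prefix_snoc_cases (j2 : ℕ) (t : List L) (x : L)
    (h : List.replicate j2 la <+: t ++ [x]) :
    (List.replicate j2 la <+: t) ∨ t ++ [x] = List.replicate j2 la := by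
  by_cases hle : j2 ≤ t.length
  · left
    have h2 := List.prefix_iff_eq_take.mp h
    rw [List.length_replicate] at h2
    rw [List.take_append_of_le_length hle] at h2
    rw [List.prefix_iff_eq_take, List.length_replicate]
    exact h2
  · right
    have hl := h.length_le
    simp only [List.length_replicate, List.length_append, List.length_cons,
      List.length_nil] at hl
    have hlen : (List.replicate j2 la).length = (t ++ [x]).length := by
      simp; omega
    exact (h.eq_of_length hlen).symm

/-- Splicing a run yields a run on the spliced tree. -/
lemma splice_isRun {Ou : Type} (A : MullerTreeAutomaton L Ou) (τ : List L → Ou)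
    (r : List L → A.Q) (hr : A.IsRun τ r) (j1 j2 : ℕ) (hlt : j1 < j2)
    (hst : r (List.replicate j1 la) = r (List.replicate j2 la)) :
    A.IsRun (splice j1 j2 τ) (splice j1 j2 r) := by
  constructor
  · have hnp : ¬ (List.replicate j2 la <+: ([] : List L)) := by
      intro h
      have := h.length_le
      simp at this
      omega
    rw [splice_of_not_prefix _ _ _ hnp]
    exact hr.1
  · intro t
    by_cases h : List.replicate j2 la <+: t
    · have h2 : ∀ x : L, List.replicate j2 la <+: t ++ [x] :=
        fun x => h.trans (List.prefix_append t [x])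
      have hjt : j2 ≤ t.length := by
        have := h.length_le; simpa using this
      have hdrop : ∀ x : L, (t ++ [x]).drop j2 = t.drop j2 ++ [x] :=
        fun x => List.drop_append_of_le_length hjt
      rw [splice_of_prefix _ _ _ h, splice_of_prefix _ _ _ h]
      have hfun : (fun x => splice j1 j2 r (t ++ [x]))
          = (fun x => r ((List.replicate j1 la ++ t.drop j2) ++ [x])) := by
        funext x
        rw [splice_of_prefix _ _ _ (h2 x), hdrop x, List.append_assoc]
      rw [hfun]
      exact hr.2 (List.replicate j1 la ++ t.drop j2)
    · rw [splice_of_not_prefix _ _ _ h, splice_of_not_prefix _ _ _ h]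
      have hfun : (fun x => splice j1 j2 r (t ++ [x])) = (fun x => r (t ++ [x])) := by
        funext x
        by_cases h2 : List.replicate j2 la <+: t ++ [x]
        · rcases prefix_snoc_cases j2 t x h2 with h3 | h3
          · exact absurd h3 h
          · rw [splice_of_prefix _ _ _ h2, h3]
            rw [List.drop_replicate, Nat.sub_self, List.replicate_zero, List.append_nil]
            exact hst
        · rw [splice_of_not_prefix _ _ _ h2]
      rw [hfun]
      exact hr.2 t

lemma prefix_range_map (j2 k : ℕ) (ρ : ℕ → L) :
    List.replicate j2 la <+: (List.range k).map ρ ↔ (j2 ≤ k ∧ ∀ m < j2, ρ m = la) := by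
  constructor
  · intro h
    have hl := h.length_le
    simp only [List.length_replicate, List.length_map, List.length_range] at hl
    refine ⟨hl, fun m hm => ?_⟩
    obtain ⟨s, hs⟩ := h
    have hm' : m < ((List.range k).map ρ).length := by simp; omega
    have e1 : ((List.range k).map ρ)[m]'hm' = ρ m := by simp
    have e2 : ((List.range k).map ρ)[m]'hm' = la := by
      rw [List.getElem_of_eq hs.symm hm',
        List.getElem_append_left (by simpa using hm), List.getElem_replicate]
    rw [← e1, e2]
  · rintro ⟨hk, hall⟩
    rw [List.prefix_iff_eq_take, List.length_replicate]
    rw [← List.map_take, List.take_range, min_eq_left hk]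
    apply List.ext_getElem
    · simp
    · intro m h1 h2
      simp only [List.getElem_replicate, List.getElem_map, List.getElem_range]
      exact (hall m (by simpa using h1)).symm

lemma sigma_prefix (j1 j2 : ℕ) (hle : j1 ≤ j2) (ρ : ℕ → L) (k : ℕ) (hk : j2 ≤ k) :
    (List.range (k - (j2 - j1))).map (fun m => if m < j1 then la else ρ (m + (j2 - j1)))
      = List.replicate j1 la ++ ((List.range k).map ρ).drop j2 := by
  apply List.ext_getElem
  · simp
    omega
  · intro m h1 h2
    simp only [List.getElem_map, List.getElem_range]
    by_cases hm : m < j1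
    · rw [List.getElem_append_left (by simpa using hm)]
      simp [hm]
    · rw [List.getElem_append_right (by simpa using hm)]
      simp only [List.length_replicate, List.getElem_drop, List.getElem_map,
        List.getElem_range]
      rw [if_neg hm]
      congr 1
      simp only [List.length_map, List.length_range, List.length_append,
        List.length_replicate, List.length_drop] at h1 h2 ⊢
      omega

end SymNotReg

open SymNotReg

/-- For `n = 2` processes with singleton `AP_I` and `AP_O`, the set of computation
trees with the symmetry property is not a regular tree language: no nondeterministic
Muller tree automaton accepts exactly the trees with the symmetry property. -/
theorem symmetry_not_regular_tree_language :
    ¬ ∃ A : MullerTreeAutomaton (Finset (Unit × ZMod 2)) (Finset (Unit × ZMod 2)),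
        ∀ τ : List (Finset (Unit × ZMod 2)) → Finset (Unit × ZMod 2),
          A.Accepts τ ↔
            (∀ (t : List (Finset (Unit × ZMod 2))) (i : ℕ), i < 2 →
              τ (rotW 2 t ((i : ℤ))) = rotL 2 (τ t) ((i : ℤ))) := by
  classical
  rintro ⟨A, hA⟩
  haveI : Fintype A.Q := A.finQ
  -- `tau` is symmetric, hence accepted
  obtain ⟨r, hrun, hF⟩ := (hA tau).mpr tau_symm
  -- pigeonhole along the branch a^ω
  obtain ⟨i, j, hne, heq⟩ := Fintype.exists_ne_map_eq_of_card_lt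
    (fun m : Fin (Fintype.card A.Q + 1) => r (List.replicate (m : ℕ) la)) (by simp)
  obtain ⟨j1, j2, hlt, hst⟩ : ∃ j1 j2 : ℕ, j1 < j2 ∧
      r (List.replicate j1 la) = r (List.replicate j2 la) := by
    rcases hne.lt_or_gt with h | h
    · exact ⟨i, j, h, heq⟩
    · exact ⟨j, i, h, heq.symm⟩
  set d : ℕ := j2 - j1 with hd
  have hd0 : 0 < d := by omega
  have hdj2 : d ≤ j2 := by omega
  -- the spliced tree is accepted
  have hacc' : A.Accepts (splice j1 j2 tau) := by
    refine ⟨splice j1 j2 r, splice_isRun A tau r hrun j1 j2 hlt hst, ?_⟩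
    intro ρ
    by_cases hρ : ∀ m < j2, ρ m = la
    · -- the branch enters the spliced subtree: compare with branch σ of the original run
      set σ : ℕ → L := fun m => if m < j1 then la else ρ (m + d) with hσ
      have key : ∀ k, j2 ≤ k →
          splice j1 j2 r ((List.range k).map ρ) = r ((List.range (k - d)).map σ) := by
        intro k hk
        have hpre : List.replicate j2 la <+: (List.range k).map ρ :=
          (prefix_range_map j2 k ρ).mpr ⟨hk, hρ⟩
        rw [splice_of_prefix _ _ _ hpre, hσ, hd,
          sigma_prefix j1 j2 (le_of_lt hlt) ρ k hk]
      have hsets : {q | ∀ N, ∃ k ≥ N, splice j1 j2 r ((List.range k).map ρ) = q}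
          = {q | ∀ N, ∃ k ≥ N, r ((List.range k).map σ) = q} := by
        ext q
        simp only [Set.mem_setOf_eq]
        constructor
        · intro hq N
          obtain ⟨k, hk1, hk2⟩ := hq (N + j2)
          exact ⟨k - d, by omega, by rw [← key k (by omega)]; exact hk2⟩
        · intro hq N
          obtain ⟨k, hk1, hk2⟩ := hq (N + j2)
          refine ⟨k + d, by omega, ?_⟩
          rw [key (k + d) (by omega)]
          simpa [Nat.add_sub_cancel] using hk2
      rw [hsets]
      exact hF σ
    · -- the branch avoids the spliced subtree
      have heqr : ∀ k, splice j1 j2 r ((List.range k).map ρ) = r ((List.range k).map ρ) := by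
        intro k
        apply splice_of_not_prefix
        rw [prefix_range_map]
        rintro ⟨-, h2⟩
        exact hρ h2
      simp only [heqr]
      exact hF ρ
  -- hence the spliced tree is symmetric
  have hsym := (hA (splice j1 j2 tau)).mp hacc'
  -- derive a contradiction
  set k0 : ℕ := max (max d j2) 1 with hk0
  have hk0d : d ≤ k0 := le_trans (le_max_left d j2) (le_max_left _ _)
  have hk0j2 : j2 ≤ k0 := le_trans (le_max_right d j2) (le_max_left _ _)
  have hk01 : 1 ≤ k0 := le_max_right _ _
  have hk0s : k0 ≤ k0 * k0 := Nat.le_mul_of_pos_left k0 hk01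
  set s : ℕ := k0 * k0 with hs
  set jj : ℕ := s + d with hjj
  have hspec := hsym (List.replicate jj lb) 1 (by norm_num)
  rw [show ((1:ℕ):ℤ) = (1:ℤ) by norm_num] at hspec
  -- LHS : the value at a^jj in the spliced tree is `la`
  have hrot : rotW 2 (List.replicate jj lb) (1:ℤ) = List.replicate jj la := by
    rw [rotW_replicate, rotL_one_b]
  have hApre : List.replicate j2 la <+: List.replicate jj la :=
    ⟨List.replicate (jj - j2) la, by rw [← List.replicate_add]; congr 1; omega⟩
  have hLHS : splice j1 j2 tau (List.replicate jj la) = la := by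
    rw [splice_of_prefix _ _ _ hApre, List.drop_replicate, ← List.replicate_add]
    have harith : j1 + (jj - j2) = s := by omega
    rw [harith]
    exact tau_repl_a (sqb_sq k0 hk01)
  -- RHS : the value at b^jj is ∅
  have hnpre : ¬ (List.replicate j2 la <+: List.replicate jj lb) := by
    intro h
    have h2 := List.prefix_iff_eq_take.mp h
    rw [List.length_replicate, List.take_replicate, min_eq_left (by omega)] at h2
    exact repl_ne j2 (by omega) h2
  have hRHS : splice j1 j2 tau (List.replicate jj lb) = ∅ := by
    rw [splice_of_not_prefix _ _ _ hnpre]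
    exact tau_repl_b_not (by rw [hjj, hs]; exact sqb_not k0 d hd0 hk0d)
  rw [hrot, hLHS, hRHS, rotL_one_empty] at hspec
  simp [la] at hspec
end

section
/- Let a and b be two distinct letters and let l be the infinite word l = a^1 b a^2 b a^3 b a^4 b …, i.e., the concatenation over i = 1, 2, 3, … of the blocks a^i b. Then l cannot be pumped: for every finite word u, every nonempty finite word v, and every infinite word z such that l = u · v · z, there exists k ∈ ℕ such that u · v^k · z ≠ l. -/
/-- The infinite word `l = a^1 b a^2 b a^3 b …`: the letter `b` occurs exactly at
the positions `i(i+3)/2 − 1` for `i ≥ 1`, i.e., at positions `k` with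
`2(k+1) = (i+1)(i+4)` for some `i ∈ ℕ`. -/
def pumpWord {α : Type} (a b : α) : ℕ → α :=
  fun k => if ((Finset.range (2 * k + 2)).filter (fun i => 2 * (k + 1) = (i + 1) * (i + 4))).Nonempty then b else a

/-- Concatenation of a finite word with an infinite word. -/
def appendInf {α : Type} (w : List α) (ρ : ℕ → α) : ℕ → α :=
  fun k => if h : k < w.length then w[k] else ρ (k - w.length)

/-- Position of the `i`-th `b` in `pumpWord`. -/
def pumpF (i : ℕ) : ℕ := (i * i + 5 * i) / 2 + 1

lemma two_pumpF (i : ℕ) : 2 * pumpF i = i * i + 5 * i + 2 := by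
  have h2 : 2 ∣ i * i + 5 * i := by
    rcases Nat.even_or_odd i with ⟨c, hc⟩ | ⟨c, hc⟩
    · exact ⟨c * (2 * c + 5), by subst hc; ring⟩
    · exact ⟨(2 * c + 1) * (c + 3), by subst hc; ring⟩
  unfold pumpF
  omega

lemma pump_eq_b {α : Type} (a b : α) (k : ℕ)
    (h : ∃ i, 2 * (k + 1) = (i + 1) * (i + 4)) : pumpWord a b k = b := by
  obtain ⟨i, hi⟩ := h
  have hib : i < 2 * k + 2 := by nlinarith
  unfold pumpWord
  rw [if_pos ⟨i, Finset.mem_filter.2 ⟨Finset.mem_range.2 hib, hi⟩⟩]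

lemma pump_eq_a {α : Type} (a b : α) (k : ℕ)
    (h : ∀ i, 2 * (k + 1) ≠ (i + 1) * (i + 4)) : pumpWord a b k = a := by
  unfold pumpWord
  rw [if_neg]
  rintro ⟨x, hx⟩
  exact h x (Finset.mem_filter.1 hx).2

lemma pump_b_at {α : Type} (a b : α) (i : ℕ) : pumpWord a b (pumpF i) = b := by
  apply pump_eq_b
  refine ⟨i, ?_⟩
  have := two_pumpF i
  nlinarith

lemma pump_a_between {α : Type} (a b : α) (I k : ℕ)
    (h1 : pumpF I < k) (h2 : k < pumpF I + I + 3) : pumpWord a b k = a := by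
  apply pump_eq_a
  intro i hi
  have hI := two_pumpF I
  rcases le_or_gt i I with hle | hlt
  · have : (i + 1) * (i + 4) ≤ (I + 1) * (I + 4) :=
      Nat.mul_le_mul (by omega) (by omega)
    nlinarith
  · have : (I + 2) * (I + 5) ≤ (i + 1) * (i + 4) :=
      Nat.mul_le_mul (by omega) (by omega)
    nlinarith

lemma pumpF_mono (i j : ℕ) (h : i ≤ j) : pumpF i ≤ pumpF j := by
  have hi := two_pumpF i
  have hj := two_pumpF j
  have : i * i ≤ j * j := Nat.mul_le_mul h h
  omega

/-- The word `l = a^1 b a^2 b a^3 b …` cannot be pumped: for every decomposition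
`l = u · v · z` with `v` nonempty, there is a `k ∈ ℕ` with `u · v^k · z ≠ l`. -/
theorem pumpWord_not_pumpable {α : Type} (a b : α) (hab : a ≠ b)
    (u v : List α) (hv : v ≠ []) (z : ℕ → α)
    (hdecomp : appendInf (u ++ v) z = pumpWord a b) :
    ∃ k : ℕ, appendInf (u ++ (List.replicate k v).flatten) z ≠ pumpWord a b := by
  refine ⟨0, fun h0 => ?_⟩
  simp only [List.replicate, List.flatten_nil, List.append_nil] at h0
  set m := u.length with hm
  set p := v.length with hpdef
  have hp1 : 1 ≤ p := List.length_pos_iff.2 hv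
  have hlen : (u ++ v).length = m + p := by simp [hm, hpdef]
  -- From the original decomposition: z t = pumpWord (m + p + t)
  have hz : ∀ t, z t = pumpWord a b (m + p + t) := by
    intro t
    have h := congrFun hdecomp (m + p + t)
    simp only [appendInf] at h
    rw [dif_neg (by omega), hlen] at h
    rwa [show m + p + t - (m + p) = t by omega] at h
  -- From the k = 0 case: z t = pumpWord (m + t)
  have hz0 : ∀ t, z t = pumpWord a b (m + t) := by
    intro t
    have h := congrFun h0 (m + t)
    simp only [appendInf] at h
    rw [dif_neg (by omega)] at h
    rwa [show m + t - u.length = t by omega] at h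
  -- Periodicity of pumpWord with period p beyond m
  have hper : ∀ t, pumpWord a b (m + t) = pumpWord a b (m + p + t) :=
    fun t => (hz0 t).symm.trans (hz t)
  have hper' : ∀ j t, pumpWord a b (m + t) = pumpWord a b (m + j * p + t) := by
    intro j
    induction j with
    | zero => intro t; simp
    | succ j ih =>
      intro t
      have h1 := ih t
      have h2 := hper (j * p + t)
      rw [show m + (j * p + t) = m + j * p + t by ring] at h2
      rw [show m + (j + 1) * p + t = m + p + (j * p + t) by ring]
      exact h1.trans h2
  -- Setup: i0 := m, I := m + p
  have hfi0 : m ≤ pumpF m := by have := two_pumpF m; nlinarith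
  have hmono : pumpF m ≤ pumpF (m + p) := pumpF_mono m (m + p) (by omega)
  set I := m + p with hI
  set d := pumpF I - pumpF m with hd
  have hdm : p * (d / p) + d % p = d := Nat.div_add_mod d p
  have hr : d % p < p := Nat.mod_lt _ (by omega)
  set q := d / p with hq
  set r := d % p with hrdef
  set s := p * q with hs
  set t0 := pumpF m - m with ht0
  have key := hper' (q + 1) t0
  rw [show m + (q + 1) * p + t0 = (m + t0) + (s + p) by rw [hs]; ring] at key
  rw [show m + t0 = pumpF m by omega] at key
  have hb : pumpWord a b (pumpF m) = b := pump_b_at a b m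
  have ha : pumpWord a b (pumpF m + (s + p)) = a := by
    apply pump_a_between a b I
    · omega
    · omega
  rw [hb, ha] at key
  exact hab key.symm
end

section
/- The compression function f : (2^AP)^ω → (2^{χ})^ω is injective: if f(w) = f(w') for infinite words w, w' ∈ (2^AP)^ω, then w = w'. -/
/-- The compression function `f : (2^AP)^ω → (2^{χ})^ω` for `AP = {x_1,…,x_n}`
(propositions indexed by `Fin n`); a compressed word is identified with the set of
positions at which `χ` holds.  Position `2i(n+1)` and `2i(n+1)+1` carry `χ`
(character start sequence), positions `2i(n+1)+2j` for `j ∈ {1,…,n}` carry `∅`,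
and `χ` holds at `2i(n+1)+2j+1` iff `x_j ∈ w_i`. -/
def fcomp (n : ℕ) (w : ℕ → (Fin n → Prop)) : ℕ → Prop :=
  fun k =>
    k % (2 * (n + 1)) = 0 ∨ k % (2 * (n + 1)) = 1 ∨
      ∃ j : Fin n, k % (2 * (n + 1)) = 2 * ((j : ℕ) + 1) + 1 ∧ w (k / (2 * (n + 1))) j

/-- The compression function is injective. -/
theorem fcomp_injective (n : ℕ) (hn : 1 ≤ n) (w w' : ℕ → (Fin n → Prop))
    (h : fcomp n w = fcomp n w') : w = w' := by
  funext i j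
  set k : ℕ := 2 * (n + 1) * i + (2 * ((j : ℕ) + 1) + 1) with hk
  have hlt : 2 * ((j : ℕ) + 1) + 1 < 2 * (n + 1) := by
    have := j.isLt; omega
  have hmod : k % (2 * (n + 1)) = 2 * ((j : ℕ) + 1) + 1 := by
    rw [hk, Nat.mul_add_mod, Nat.mod_eq_of_lt hlt]
  have hdiv : k / (2 * (n + 1)) = i := by
    rw [hk, Nat.add_comm, Nat.add_mul_div_left _ _ (by omega : 0 < 2 * (n + 1)),
      Nat.div_eq_of_lt hlt]; omega
  have hkey : fcomp n w k ↔ fcomp n w' k := by rw [h]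
  have aux : ∀ v : ℕ → (Fin n → Prop), fcomp n v k ↔ v i j := by
    intro v
    constructor
    · rintro (h0 | h1 | ⟨j', hj', hv⟩)
      · omega
      · omega
      · have : (j' : ℕ) = (j : ℕ) := by omega
        have : j' = j := Fin.ext this
        rw [hdiv] at hv; rwa [this] at hv
    · intro hv
      exact Or.inr (Or.inr ⟨j, hmod, by rwa [hdiv]⟩)
  rw [aux w, aux w'] at hkey
  exact propext hkey
end

section
/- In every compressed word, the pattern χ, χ, ¬χ identifies exactly the character start positions: for every w ∈ (2^AP)^ω, letting w' = f(w), and for every k ∈ ℕ, we have (χ ∈ w'_k and χ ∈ w'_{k+1} and χ ∉ w'_{k+2}) if and only if k = 2i(n+1) for some i ∈ ℕ. -/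
/-- In every compressed word, the pattern `χ, χ, ¬χ` identifies exactly the
character start positions `2i(n+1)`. -/
theorem fcomp_pattern_iff_start (n : ℕ) (hn : 1 ≤ n) (w : ℕ → (Fin n → Prop)) (k : ℕ) :
    (fcomp n w k ∧ fcomp n w (k + 1) ∧ ¬ fcomp n w (k + 2)) ↔
      ∃ i : ℕ, k = 2 * i * (n + 1) := by
  have hm4 : 4 ≤ 2 * (n + 1) := by omega
  have h1m : 1 % (2 * (n + 1)) = 1 := Nat.mod_eq_of_lt (by omega)
  constructor
  · rintro ⟨h0, h1, h2⟩
    have hr : k % (2 * (n + 1)) = 0 := by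
      rcases h0 with h | h | ⟨j, hj, _⟩
      · exact h
      · exfalso
        have e1 : (k + 1) % (2 * (n + 1)) = 2 := by
          rw [Nat.add_mod, h, h1m]
          exact Nat.mod_eq_of_lt (by omega)
        rcases h1 with h' | h' | ⟨j', hj', _⟩ <;> omega
      · have hjn : (j : ℕ) < n := j.isLt
        by_cases hend : (j : ℕ) + 1 = n
        · exfalso
          have e1 : (k + 1) % (2 * (n + 1)) = 0 := by
            rw [Nat.add_mod, hj, h1m]
            have : 2 * ((j : ℕ) + 1) + 1 + 1 = 2 * (n + 1) := by omega
            rw [this, Nat.mod_self]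
          have e2 : (k + 2) % (2 * (n + 1)) = 1 := by
            have hk2 : k + 2 = (k + 1) + 1 := rfl
            rw [hk2, Nat.add_mod, e1, h1m]
            simpa using h1m
          exact h2 (Or.inr (Or.inl e2))
        · exfalso
          have e1 : (k + 1) % (2 * (n + 1)) = 2 * ((j : ℕ) + 1) + 2 := by
            rw [Nat.add_mod, hj, h1m]
            exact Nat.mod_eq_of_lt (by omega)
          rcases h1 with h' | h' | ⟨j', hj', _⟩ <;> omega
    refine ⟨k / (2 * (n + 1)), ?_⟩
    have hdm := Nat.div_add_mod k (2 * (n + 1))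
    have : 2 * (k / (2 * (n + 1))) * (n + 1) = 2 * (n + 1) * (k / (2 * (n + 1))) := by ring
    rw [this]
    linarith
  · rintro ⟨i, rfl⟩
    have hk : (2 * i * (n + 1)) % (2 * (n + 1)) = 0 := by
      have : 2 * i * (n + 1) = (2 * (n + 1)) * i := by ring
      rw [this, Nat.mul_mod_right]
    have e1 : (2 * i * (n + 1) + 1) % (2 * (n + 1)) = 1 := by
      rw [Nat.add_mod, hk, h1m]
      simpa using h1m
    have e2 : (2 * i * (n + 1) + 2) % (2 * (n + 1)) = 2 := by
      rw [Nat.add_mod, hk]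
      have h2m : 2 % (2 * (n + 1)) = 2 := Nat.mod_eq_of_lt (by omega)
      rw [h2m]
      simpa using h2m
    refine ⟨Or.inl hk, Or.inr (Or.inl e1), ?_⟩
    rintro (h | h | ⟨j, hj, _⟩) <;> omega
end

section
/- The formula compression function f' is adjoint to the word compression function f: for every LTL formula ψ over AP = {x_1,…,x_n}, every infinite word w ∈ (2^AP)^ω, and every i ∈ ℕ, it holds that w, i ⊨ ψ if and only if f(w), 2(n+1)·i ⊨ f'(ψ). -/
/-- LTL formulas over a set `α` of propositions. -/
inductive LTLf (α : Type) : Type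
  | tt : LTLf α
  | ff : LTLf α
  | atom : α → LTLf α
  | not : LTLf α → LTLf α
  | and : LTLf α → LTLf α → LTLf α
  | or : LTLf α → LTLf α → LTLf α
  | next : LTLf α → LTLf α
  | untl : LTLf α → LTLf α → LTLf α

/-- LTL satisfaction `w,i ⊨ ψ` for an infinite word `w ∈ (2^α)^ω`. -/
def LTLf.Sat {α : Type} (w : ℕ → (α → Prop)) : LTLf α → ℕ → Prop
  | .tt, _ => True
  | .ff, _ => False
  | .atom p, i => w i p
  | .not φ, i => ¬ LTLf.Sat w φ i
  | .and φ ψ, i => LTLf.Sat w φ i ∧ LTLf.Sat w ψ i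
  | .or φ ψ, i => LTLf.Sat w φ i ∨ LTLf.Sat w ψ i
  | .next φ, i => LTLf.Sat w φ (i + 1)
  | .untl φ ψ, i => ∃ k, i ≤ k ∧ LTLf.Sat w ψ k ∧ ∀ j, i ≤ j → j < k → LTLf.Sat w φ j

/-- `X^m ψ`: `m` nested next operators. -/
def LTLf.nextIter {α : Type} (m : ℕ) (φ : LTLf α) : LTLf α :=
  (LTLf.next)^[m] φ

/-- The character start sequence formula `χ ∧ X χ ∧ X X ¬χ` over the single
proposition `χ` (represented by `Unit`). -/
def cssF : LTLf Unit :=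
  .and (.atom ()) (.and (.next (.atom ())) (.next (.next (.not (.atom ())))))

/-- The formula compression function `f'` for `AP = {x_1,…,x_n}` (indexed by `Fin n`),
mapping LTL formulas over `AP` to LTL formulas over `{χ}`, where implication
`a → b` is expressed as `¬a ∨ b`. -/
def fLTL (n : ℕ) : LTLf (Fin n) → LTLf Unit
  | .tt => .tt
  | .ff => .ff
  | .atom j => LTLf.nextIter (2 * ((j : ℕ) + 1) + 1) (.atom ())
  | .not φ => .not (fLTL n φ)
  | .and φ ψ => .and (fLTL n φ) (fLTL n ψ)
  | .or φ ψ => .or (fLTL n φ) (fLTL n ψ)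
  | .next φ => LTLf.nextIter (2 * (n + 1)) (fLTL n φ)
  | .untl φ ψ => .untl (.or (.not cssF) (fLTL n φ)) (.and cssF (fLTL n ψ))

lemma sat_nextIter {α : Type} (w : ℕ → α → Prop) (m : ℕ) (φ : LTLf α) (i : ℕ) :
    LTLf.Sat w (LTLf.nextIter m φ) i ↔ LTLf.Sat w φ (i + m) := by
  induction m generalizing φ i with
  | zero => simp [LTLf.nextIter]
  | succ m ih =>
    rw [show LTLf.nextIter (m+1) φ = LTLf.nextIter m (.next φ) from
      Function.iterate_succ_apply _ _ _, ih]
    rfl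

lemma fcomp_at (n : ℕ) (w : ℕ → Fin n → Prop) (i r : ℕ) (hr : r < 2*(n+1)) :
    fcomp n w (2*(n+1)*i + r) ↔
      (r = 0 ∨ r = 1 ∨ ∃ j : Fin n, r = 2*((j:ℕ)+1)+1 ∧ w i j) := by
  unfold fcomp
  rw [Nat.mul_add_mod, Nat.mod_eq_of_lt hr, Nat.mul_add_div (by omega), Nat.div_eq_of_lt hr,
    Nat.add_zero]

lemma css_iff (n : ℕ) (hn : 1 ≤ n) (w : ℕ → Fin n → Prop) (k : ℕ) :
    LTLf.Sat (fun k (_ : Unit) => fcomp n w k) cssF k ↔ ∃ q, k = 2*(n+1)*q := by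
  simp only [cssF, LTLf.Sat]
  constructor
  · rintro ⟨h0, h1, h2⟩
    obtain ⟨q, r, hr, rfl⟩ : ∃ q r, r < 2*(n+1) ∧ k = 2*(n+1)*q + r :=
      ⟨k / (2*(n+1)), k % (2*(n+1)), Nat.mod_lt _ (by omega), (Nat.div_add_mod k _).symm⟩
    rw [fcomp_at n w q r hr] at h0
    by_cases hB : r + 1 < 2*(n+1)
    · rw [show 2*(n+1)*q + r + 1 = 2*(n+1)*q + (r+1) by ring, fcomp_at n w q (r+1) hB] at h1
      rcases h1 with h1 | h1 | ⟨j, hj, -⟩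
      · omega
      · exact ⟨q, by omega⟩
      · rcases h0 with h0 | h0 | ⟨j', hj', -⟩ <;> omega
    · exfalso
      apply h2
      have hx : 2*(n+1)*(q+1) = 2*(n+1)*q + 2*(n+1) := by ring
      rw [show 2*(n+1)*q + r + 1 + 1 = 2*(n+1)*(q+1) + 1 by omega,
        fcomp_at n w (q+1) 1 (by omega)]
      right; left; rfl
  · rintro ⟨q, rfl⟩
    refine ⟨?_, ?_, ?_⟩
    · rw [show 2*(n+1)*q = 2*(n+1)*q + 0 by ring, fcomp_at n w q 0 (by omega)]
      left; rfl
    · rw [fcomp_at n w q 1 (by omega)]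
      right; left; rfl
    · rw [show 2*(n+1)*q + 1 + 1 = 2*(n+1)*q + 2 by ring, fcomp_at n w q 2 (by omega)]
      rintro (h | h | ⟨j, hj, -⟩) <;> omega
/-- The formula compression function `f'` is adjoint to the word compression
function `f`: `w,i ⊨ ψ` iff `f(w), 2(n+1)·i ⊨ f'(ψ)`. -/
theorem fLTL_adjoint (n : ℕ) (hn : 1 ≤ n) (ψ : LTLf (Fin n))
    (w : ℕ → (Fin n → Prop)) (i : ℕ) :
    LTLf.Sat w ψ i ↔
      LTLf.Sat (fun k (_ : Unit) => fcomp n w k) (fLTL n ψ) (2 * (n + 1) * i) := by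
  induction ψ generalizing i with
  | tt => simp [fLTL, LTLf.Sat]
  | ff => simp [fLTL, LTLf.Sat]
  | atom j =>
    have hr : 2*((j:ℕ)+1)+1 < 2*(n+1) := by have := j.isLt; omega
    rw [show fLTL n (.atom j) = LTLf.nextIter (2*((j:ℕ)+1)+1) (.atom ()) from rfl,
      sat_nextIter]
    show w i j ↔ fcomp n w _
    rw [fcomp_at n w i _ hr]
    constructor
    · intro h
      exact Or.inr (Or.inr ⟨j, rfl, h⟩)
    · rintro (h | h | ⟨j', hj', hw⟩)
      · omega
      · omega
      · have hjj : j' = j := Fin.ext (by omega)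
        rwa [hjj] at hw
  | not φ ih => simp only [fLTL, LTLf.Sat, ih]
  | and φ ψ ihφ ihψ => simp only [fLTL, LTLf.Sat, ihφ, ihψ]
  | or φ ψ ihφ ihψ => simp only [fLTL, LTLf.Sat, ihφ, ihψ]
  | next φ ih =>
    rw [show fLTL n (.next φ) = LTLf.nextIter (2*(n+1)) (fLTL n φ) from rfl, sat_nextIter,
      show 2*(n+1)*i + 2*(n+1) = 2*(n+1)*(i+1) by ring]
    exact ih (i+1)
  | untl φ ψ ihφ ihψ =>
    rw [show fLTL n (.untl φ ψ) =
      .untl (.or (.not cssF) (fLTL n φ)) (.and cssF (fLTL n ψ)) from rfl]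
    simp only [LTLf.Sat]
    constructor
    · rintro ⟨k, hik, hψ, hφ⟩
      refine ⟨2*(n+1)*k, Nat.mul_le_mul_left _ hik,
        ⟨(css_iff n hn w _).mpr ⟨k, rfl⟩, (ihψ k).mp hψ⟩, ?_⟩
      intro J hJ1 hJ2
      by_cases hc : LTLf.Sat (fun k (_ : Unit) => fcomp n w k) cssF J
      · obtain ⟨q, rfl⟩ := (css_iff n hn w J).mp hc
        have h1 : i ≤ q := Nat.le_of_mul_le_mul_left hJ1 (by omega)
        have h2 : q < k := Nat.lt_of_mul_lt_mul_left hJ2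
        exact Or.inr ((ihφ q).mp (hφ q h1 h2))
      · exact Or.inl hc
    · rintro ⟨K, hK1, ⟨hcss, hψ'⟩, h⟩
      obtain ⟨k, rfl⟩ := (css_iff n hn w K).mp hcss
      have hik : i ≤ k := Nat.le_of_mul_le_mul_left hK1 (by omega)
      refine ⟨k, hik, (ihψ k).mpr hψ', ?_⟩
      intro j hj1 hj2
      rcases h (2*(n+1)*j) (Nat.mul_le_mul_left _ hj1)
          ((mul_lt_mul_iff_right₀ (show 0 < 2*(n+1) by omega)).mpr hj2) with hc | hφ'
      · exact absurd ((css_iff n hn w _).mpr ⟨j, rfl⟩) hc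
      · exact (ihφ j).mpr hφ'
end
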